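/- Let G be a finite group, p a prime, R = Z_(p), and let F be a family of p-subgroups of G. Suppose H ≤ G controls p-fusion in G. Then restriction M ↦ res^G_H M induces a bijection between the isomorphism classes of conjugation invariant right RΓ_G-modules and the isomorphism classes of conjugation invariant right RΓ_H-modules. -/

import Mathlib

/-!
A module is conjugation invariant exactly when it factors through the quotient of the orbit
category by the congruence identifying two maps `G/Q ⟶ G/K` that differ by an element of
`C_G(Q)`. The functor `Or_{F_H}(H) ⥤ Or_F(G)` induces an equivalence of these quotients. It is
essentially surjective because a `p`-subgroup `Q` acting on `G/H`, a set of size prime to `p`,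
has a fixed point, so `Q` is conjugate into `H`; it is full because control of fusion writes
every `g` with `g⁻¹Qg ≤ H` as `ch` with `c ∈ C_G(Q)` and `h ∈ H`; and it is faithful because an
element of `C_G(Q)` relating two maps defined over `H` already lies in `H`. Precomposition with
an equivalence is an equivalence of functor categories, which gives the bijection. Finite
generation transfers back because, by Yoneda, it means generation by finitely many elements,
and every object of `Or_F(G)` is isomorphic to one coming from `H`.
-/

open CategoryTheory CategoryTheory.Limits

namespace OrbitPaper

variable {G : Type} [Group G]

/-- The conjugate subgroup `gKg⁻¹`. -/
def conjSub (g : G) (K : Subgroup G) : Subgroup G :=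
  K.map (MulAut.conj g).toMonoidHom

/-- A *family* of subgroups: a collection closed under conjugation and taking subgroups. -/
def IsFamily (F : Set (Subgroup G)) : Prop :=
  (∀ K ∈ F, ∀ g : G, conjSub g K ∈ F) ∧ (∀ K ∈ F, ∀ L : Subgroup G, L ≤ K → L ∈ F)

/-- `Fix A B` is the set of cosets of `B` in `G` that are fixed by the left translation
action of `A`; it is in canonical bijection with the set of `G`-maps `G/A ⟶ G/B`. -/
def Fix (A B : Subgroup G) : Type :=
  {x : G ⧸ B // ∀ a ∈ A, a • x = x}

namespace Fix

variable {A B C D : Subgroup G}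

/-- The action of a `G`-map `G/B ⟶ G/C` on cosets of `B`. -/
def ap (x : Fix B C) (y : G ⧸ B) : G ⧸ C :=
  Quotient.liftOn' y (fun a => a • x.1) (by
    intro a b hab
    rw [QuotientGroup.leftRel_apply] at hab
    show a • x.1 = b • x.1
    conv_rhs => rw [show b = a * (a⁻¹ * b) by group]
    rw [mul_smul, x.2 _ hab])

@[simp] lemma ap_mk (x : Fix B C) (a : G) : x.ap ((a : G) : G ⧸ B) = a • x.1 := rfl

lemma ap_smul (x : Fix B C) (g : G) (y : G ⧸ B) : x.ap (g • y) = g • x.ap y := by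
  induction y using Quotient.inductionOn' with
  | h a =>
    show x.ap (g • ((a : G) : G ⧸ B)) = g • x.ap ((a : G) : G ⧸ B)
    rw [MulAction.Quotient.smul_mk, ap_mk, ap_mk, smul_eq_mul, mul_smul]

/-- Composition of `G`-maps between coset spaces. -/
def comp (f : Fix A B) (x : Fix B C) : Fix A C :=
  ⟨x.ap f.1, fun a ha => by rw [← ap_smul, f.2 a ha]⟩

/-- The identity `G`-map `G/A ⟶ G/A`. -/
def one (A : Subgroup G) : Fix A A :=
  ⟨((1 : G) : G ⧸ A), fun a ha => by
    show a • ((1 : G) : G ⧸ A) = _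
    rw [MulAction.Quotient.smul_mk]
    exact (QuotientGroup.eq).2 (by simpa using ha)⟩

lemma ap_one (y : G ⧸ B) : (one B).ap y = y := by
  induction y using Quotient.inductionOn' with
  | h a =>
    show (one B).ap ((a : G) : G ⧸ B) = _
    rw [ap_mk]
    show a • ((1 : G) : G ⧸ B) = _
    rw [MulAction.Quotient.smul_mk, smul_eq_mul, mul_one]

lemma ap_ap (g : Fix B C) (h : Fix C D) (y : G ⧸ B) :
    (g.comp h).ap y = h.ap (g.ap y) := by
  induction y using Quotient.inductionOn' with
  | h a =>
    show (g.comp h).ap ((a : G) : G ⧸ B) = h.ap ((g.ap ((a : G) : G ⧸ B)))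
    rw [ap_mk, ap_mk, ap_smul]
    rfl

@[simp] lemma one_comp (x : Fix A B) : (one A).comp x = x := by
  apply Subtype.ext
  show x.ap ((1 : G) : G ⧸ A) = x.1
  rw [ap_mk, one_smul]

@[simp] lemma comp_one (f : Fix A B) : f.comp (one B) = f :=
  Subtype.ext (ap_one f.1)

lemma comp_assoc (f : Fix A B) (g : Fix B C) (h : Fix C D) :
    (f.comp g).comp h = f.comp (g.comp h) :=
  Subtype.ext (ap_ap g h f.1).symm

end Fix

/-- The orbit category `Or_F(G)`: objects are the subgroups in the family `F`
(representing the coset `G`-sets `G/H`), morphisms are the `G`-maps `G/H ⟶ G/K`. -/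
structure Obj (G : Type) [Group G] (F : Set (Subgroup G)) : Type where
  grp : Subgroup G
  mem : grp ∈ F

instance (F : Set (Subgroup G)) : Category (Obj G F) where
  Hom K L := Fix K.grp L.grp
  id K := Fix.one K.grp
  comp f g := f.comp g
  id_comp f := Fix.one_comp f
  comp_id f := Fix.comp_one f
  assoc f g h := Fix.comp_assoc f g h

/-- The category of (right) `RΓ_G`-modules: contravariant functors from the orbit
category `Or_F(G)` to `R`-modules. -/
abbrev OMod (G : Type) [Group G] (R : Type) [CommRing R] (F : Set (Subgroup G)) :=
  (Obj G F)ᵒᵖ ⥤ ModuleCat.{0} R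

instance (R : Type) [CommRing R] (F : Set (Subgroup G)) :
    HasFiniteBiproducts (OMod G R F) :=
  Abelian.hasFiniteBiproducts

variable (R : Type) [CommRing R]

/-- The `RΓ_G`-module `R[(G/L)^?]` sending `G/K` to the free `R`-module on the
`K`-fixed points of `G/L`.  For `L ∈ F` these are exactly the free modules `R[G/L^?]`. -/
noncomputable def stdMod (F : Set (Subgroup G)) (L : Subgroup G) : OMod G R F where
  obj K := ModuleCat.of R (Fix K.unop.grp L →₀ R)
  map {K K'} f := ModuleCat.ofHom (Finsupp.lmapDomain R R (fun x => Fix.comp f.unop x))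
  map_id K := by
    have h : (fun x => Fix.comp (𝟙 K).unop x) = (id : Fix K.unop.grp L → Fix K.unop.grp L) :=
      funext fun x => Fix.one_comp x
    show ModuleCat.ofHom (Finsupp.lmapDomain R R _) = _
    rw [h, Finsupp.lmapDomain_id]
    rfl
  map_comp {K K' K''} f g := by
    have h : (fun x : Fix K.unop.grp L => Fix.comp ((f ≫ g).unop) x) =
        (fun x : Fix K'.unop.grp L => Fix.comp g.unop x) ∘
          (fun x : Fix K.unop.grp L => Fix.comp f.unop x) :=
      funext fun x => (Fix.comp_assoc g.unop f.unop x)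
    show ModuleCat.ofHom (Finsupp.lmapDomain R R _) = _
    rw [h, Finsupp.lmapDomain_comp]
    rfl

variable {R}

/-- A finitely generated free `RΓ_G`-module: a finite direct sum of modules
`R[G/K^?]` with `K ∈ F`. -/
def IsFiniteFree {F : Set (Subgroup G)} (M : OMod G R F) : Prop :=
  ∃ (n : ℕ) (Ks : Fin n → Obj G F),
    Nonempty (M ≅ ⨁ (fun i => stdMod R F (Ks i).grp))

/-- A finitely generated projective `RΓ_G`-module: a direct summand (retract) of a
finitely generated free module. -/
def IsFGProjective {F : Set (Subgroup G)} (M : OMod G R F) : Prop :=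
  ∃ N : OMod G R F, IsFiniteFree N ∧ ∃ (s : M ⟶ N) (r : N ⟶ M), s ≫ r = 𝟙 M

/-- A finitely generated `RΓ_G`-module: admits an epimorphism from a finitely
generated free module. -/
def IsFG {F : Set (Subgroup G)} (M : OMod G R F) : Prop :=
  ∃ N : OMod G R F, IsFiniteFree N ∧ ∃ p : N ⟶ M, Epi p

/-- `P` is a projective resolution of `M` of length `≤ n`, by finitely generated
projective modules:  `0 → P_n → ⋯ → P_0 → M → 0` is exact. -/
def IsFiniteProjRes {F : Set (Subgroup G)} (M : OMod G R F)
    (P : ChainComplex (OMod G R F) ℕ)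
    (π : P ⟶ (ChainComplex.single₀ (OMod G R F)).obj M) (n : ℕ) : Prop :=
  (∀ i, IsFGProjective (P.X i)) ∧ (∀ i, i > n → IsZero (P.X i)) ∧ QuasiIso π

/-- `M` admits a finite projective resolution. -/
def HasFiniteProjRes {F : Set (Subgroup G)} (M : OMod G R F) : Prop :=
  ∃ P π n, IsFiniteProjRes M P π n


section Restriction

variable (H : Subgroup G)

/-- The family of subgroups of `H` induced by a family `F` of subgroups of `G`. -/
def fam (F : Set (Subgroup G)) : Set (Subgroup ↥H) :=
  {K : Subgroup ↥H | K.map H.subtype ∈ F}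

/-- The canonical map `H/L → G/L`. -/
def push (L : Subgroup ↥H) : ↥H ⧸ L → G ⧸ (L.map H.subtype) :=
  Quotient.map' Subtype.val (by
    intro a b hab
    rw [QuotientGroup.leftRel_apply] at hab ⊢
    exact ⟨a⁻¹ * b, hab, rfl⟩)

@[simp] lemma push_mk (L : Subgroup ↥H) (a : ↥H) :
    push H L ((a : ↥H) : ↥H ⧸ L) = ((a : G) : G ⧸ (L.map H.subtype)) := rfl

lemma push_smul (L : Subgroup ↥H) (h : ↥H) (y : ↥H ⧸ L) :
    push H L (h • y) = (h : G) • push H L y := by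
  induction y using Quotient.inductionOn' with
  | h a =>
    show push H L (h • ((a : ↥H) : ↥H ⧸ L)) = (h : G) • push H L ((a : ↥H) : ↥H ⧸ L)
    rw [MulAction.Quotient.smul_mk, push_mk, push_mk, MulAction.Quotient.smul_mk]
    rfl

lemma ap_push {L M : Subgroup ↥H} (g : Fix L M)
    (w : Fix (L.map H.subtype) (M.map H.subtype))
    (hw : w.1 = push H M g.1) (y : ↥H ⧸ L) :
    w.ap (push H L y) = push H M (g.ap y) := by
  induction y using Quotient.inductionOn' with
  | h a =>
    show w.ap (((a : G)) : G ⧸ (L.map H.subtype)) = push H M (g.ap ((a : ↥H) : ↥H ⧸ L))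
    rw [Fix.ap_mk, Fix.ap_mk, hw, ← push_smul]

/-- The functor `Or_{F_H}(H) ⥤ Or_F(G)` sending `H/K` to `G/K`. -/
def toG (F : Set (Subgroup G)) : Obj ↥H (fam H F) ⥤ Obj G F where
  obj K := ⟨K.grp.map H.subtype, K.mem⟩
  map {K L} f := ⟨push H L.grp f.1, by
    rintro g hg
    obtain ⟨k, hk, rfl⟩ := hg
    show ((k : ↥H) : G) • push H L.grp f.1 = push H L.grp f.1
    rw [← push_smul, f.2 k hk]⟩
  map_id K := Subtype.ext (by
    show push H K.grp (((1 : ↥H)) : ↥H ⧸ K.grp) = (((1 : G)) : G ⧸ _)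
    rw [push_mk, OneMemClass.coe_one])
  map_comp {K L M} f g := Subtype.ext ((ap_push H g _ rfl f.1).symm)

/-- The restriction functor `res^G_H` from `RΓ_G`-modules to `RΓ_H`-modules,
given by precomposition with `toG`. -/
def resF (R : Type) [CommRing R] (F : Set (Subgroup G)) (H : Subgroup G) :
    OMod G R F ⥤ OMod ↥H R (fam H F) :=
  (Functor.whiskeringLeft _ _ (ModuleCat.{0} R)).obj (toG H F).op

instance (R : Type) [CommRing R] (F : Set (Subgroup G)) (H : Subgroup G) :
    (resF R F H).Additive where
  map_add {X Y f g} := by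
    ext K
    rfl

end Restriction

section Conjugation

lemma mem_normalizer_of_mem_centralizer {Q : Subgroup G} {c : G}
    (hc : c ∈ Subgroup.centralizer (Q : Set G)) : c ∈ Subgroup.normalizer (Q : Set G) := by
  rw [Subgroup.mem_normalizer_iff]
  intro h
  constructor
  · intro hh
    have hcomm : h * c = c * h := Subgroup.mem_centralizer_iff.mp hc h hh
    have : c * h * c⁻¹ = h := by rw [← hcomm]; group
    rwa [this]
  · intro hh
    have hch : c * h * c⁻¹ ∈ Q := hh
    have hcomm : (c * h * c⁻¹) * c = c * (c * h * c⁻¹) :=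
      Subgroup.mem_centralizer_iff.mp hc _ hch
    have h1 : c * h = (c * h * c⁻¹) * c := by group
    have h4 : c * h = c * (c * h * c⁻¹) := h1.trans hcomm
    have h5 : h = c * h * c⁻¹ := mul_left_cancel h4
    rw [h5]
    exact hch
    
/-- The endomorphism of `G/Q` in the orbit category determined by an element
`n` of the normalizer of `Q`; it sends `gQ` to `g n⁻¹ Q`. -/
def conjMor {F : Set (Subgroup G)} (Q : Obj G F) (n : G) (hn : n ∈ Subgroup.normalizer (Q.grp : Set G)) :
    Q ⟶ Q :=
  ⟨((n⁻¹ : G) : G ⧸ Q.grp), fun q hq => by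
    show q • (((n⁻¹ : G)) : G ⧸ Q.grp) = _
    rw [MulAction.Quotient.smul_mk, smul_eq_mul]
    refine (QuotientGroup.eq).2 ?_
    have : (q * n⁻¹)⁻¹ * n⁻¹ = n * q⁻¹ * n⁻¹ := by group
    rw [this]
    exact (Subgroup.mem_normalizer_iff.mp hn q⁻¹).mp (inv_mem hq)⟩

/-- An `RΓ_G`-module `M` is conjugation invariant if, for every `Q ∈ F`,
the centralizer `C_G(Q)` acts trivially on `M(Q)`. -/
def ConjInv {R : Type} [CommRing R] {F : Set (Subgroup G)} (M : OMod G R F) : Prop :=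
  ∀ (Q : Obj G F) (c : G) (hc : c ∈ Subgroup.centralizer (Q.grp : Set G)),
    M.map (conjMor Q c (mem_normalizer_of_mem_centralizer hc)).op = 𝟙 (M.obj (Opposite.op Q))

/-- A subgroup `H` controls `p`-fusion in `G`. -/
def ControlsPFusion (p : ℕ) (H : Subgroup G) : Prop :=
  ¬ (p ∣ H.index) ∧
    ∀ (Q : Subgroup G) (g : G), Q ≤ H → IsPGroup p ↥Q → conjSub g⁻¹ Q ≤ H →
      ∃ c ∈ Subgroup.centralizer (Q : Set G), ∃ h ∈ H, g = c * h

end Conjugation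

section Chains

variable {F : Set (Subgroup G)}

/-- `(A) ≤ (B)` : some conjugate of `A` is contained in `B`. -/
def classLE (A B : Obj G F) : Prop := ∃ g : G, conjSub g A.grp ≤ B.grp

/-- `(A) < (B)` in the partial order of conjugacy classes of subgroups in `F`. -/
def classLT (A B : Obj G F) : Prop := classLE A B ∧ ¬ classLE B A

/-- A strict chain `(K_0) < (K_1) < ⋯ < (K_l)` of conjugacy classes in `F`. -/
def IsStrictChain {l : ℕ} (c : Fin (l + 1) → Obj G F) : Prop :=
  ∀ i : Fin l, classLT (c i.castSucc) (c i.succ)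

end Chains


section Local

lemma spanPrime (p : ℕ) (hp : p.Prime) : (Ideal.span {(p : ℤ)}).IsPrime := by
  rw [Ideal.span_singleton_prime (by exact_mod_cast hp.ne_zero)]
  exact Nat.prime_iff_prime_int.mp hp

/-- The ring `ℤ_(p)` of `p`-local integers. -/
abbrev zloc (p : ℕ) (hp : p.Prime) : Type :=
  Localization (@Ideal.primeCompl ℤ _ (Ideal.span {(p : ℤ)}) (spanPrime p hp))

instance {R S : Type} [CommRing R] [CommRing S] (f : R →+* S) :
    (ModuleCat.extendScalars.{0,0,0} f).Additive := by
  letI : PreservesColimits (ModuleCat.extendScalars.{0,0,0} f) :=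
    (ModuleCat.extendRestrictScalarsAdj f).leftAdjoint_preservesColimits
  letI := preservesBinaryBiproducts_of_preservesBinaryCoproducts
    (ModuleCat.extendScalars.{0,0,0} f)
  exact Functor.additive_of_preservesBinaryBiproducts _

/-- The `p`-localization functor on `ℤΓ_G`-modules, applying `ℤ_(p) ⊗_ℤ -` objectwise. -/
noncomputable def locF (F : Set (Subgroup G)) (p : ℕ) (hp : p.Prime) :
    OMod G ℤ F ⥤ OMod G (zloc p hp) F :=
  (Functor.whiskeringRight _ _ _).obj (ModuleCat.extendScalars (algebraMap ℤ (zloc p hp)))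

instance (F : Set (Subgroup G)) (p : ℕ) (hp : p.Prime) : (locF F p hp).Additive where
  map_add {X Y f g} := by
    refine NatTrans.ext (funext fun K => ?_)
    show (ModuleCat.extendScalars (algebraMap ℤ (zloc p hp))).map ((f + g).app K) = _
    rw [NatTrans.app_add, Functor.map_add]
    rfl

end Local


instance hasExtOMod (R : Type) [CommRing R] (F : Set (Subgroup G)) :
    HasExt.{1} (OMod G R F) := by
  letI : HasDerivedCategory.{1} (OMod G R F) := HasDerivedCategory.standard _
  exact hasExt_of_hasDerivedCategory.{1} _

lemma mem_conjSub_iff {g x : G} {K : Subgroup G} : x ∈ conjSub g K ↔ g⁻¹ * x * g ∈ K := by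
  rw [conjSub, Subgroup.mem_map_equiv]
  simp [MulAut.conj_symm_apply]

lemma conjSub_inv_le_iff {g : G} {K L : Subgroup G} :
    conjSub g⁻¹ K ≤ L ↔ ∀ k ∈ K, g⁻¹ * k * g ∈ L := by
  simp [conjSub, SetLike.le_def]

lemma conj_mem_centralizer {A B : Subgroup G} {x c : G} (hx : ∀ a ∈ A, x⁻¹ * a * x ∈ B)
    (hc : c ∈ Subgroup.centralizer (B : Set G)) :
    x * c * x⁻¹ ∈ Subgroup.centralizer (A : Set G) := by
  refine Subgroup.mem_centralizer_iff.2 fun a ha => ?_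
  have hcomm := Subgroup.mem_centralizer_iff.1 hc _ (hx a ha)
  calc a * (x * c * x⁻¹) = x * ((x⁻¹ * a * x) * c) * x⁻¹ := by group
    _ = x * (c * (x⁻¹ * a * x)) * x⁻¹ := by rw [hcomm]
    _ = x * c * x⁻¹ * a := by group

lemma conj_mem_of_smul_eq {A B : Subgroup G} {g : G} (h : ∀ a ∈ A, a • (g : G ⧸ B) = g) {a : G}
    (ha : a ∈ A) : g⁻¹ * a * g ∈ B := by
  have hfix := h a⁻¹ (inv_mem ha)
  rw [MulAction.Quotient.smul_mk, smul_eq_mul, QuotientGroup.eq] at hfix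
  simpa [mul_assoc] using hfix

section OrbitCategory

variable {F : Set (Subgroup G)}

lemma hom_ext {A B : Obj G F} {f g : A ⟶ B} (h : f.1 = g.1) : f = g := Subtype.ext h

lemma comp_val {A B C : Obj G F} (f : A ⟶ B) (g : B ⟶ C) : (f ≫ g).1 = g.ap f.1 := rfl

lemma id_val (A : Obj G F) : (𝟙 A : A ⟶ A).1 = ((1 : G) : G ⧸ A.grp) := rfl

lemma conjMor_val (Q : Obj G F) (n : G) (hn) : (conjMor Q n hn).1 = ((n⁻¹ : G) : G ⧸ Q.grp) := rfl

lemma conj_mem_of_val_eq {A B : Obj G F} (f : A ⟶ B) {g : G} (hg : f.1 = g) {a : G}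
    (ha : a ∈ A.grp) : g⁻¹ * a * g ∈ B.grp :=
  conj_mem_of_smul_eq (hg ▸ f.2) ha

def mkHom (A B : Obj G F) (g : G) (h : ∀ a ∈ A.grp, g⁻¹ * a * g ∈ B.grp) : A ⟶ B :=
  ⟨((g : G) : G ⧸ B.grp), fun a ha => by
    rw [MulAction.Quotient.smul_mk, smul_eq_mul, QuotientGroup.eq]
    simpa [mul_assoc] using h a⁻¹ (inv_mem ha)⟩

lemma mkHom_val (A B : Obj G F) (g : G) (h) : (mkHom A B g h).1 = ((g : G) : G ⧸ B.grp) := rfl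

def isoOfConj (A B : Obj G F) (g : G) (hg : conjSub g⁻¹ A.grp = B.grp) : A ≅ B where
  hom := mkHom A B g (conjSub_inv_le_iff.1 hg.le)
  inv := mkHom B A g⁻¹ fun b hb => by
    rw [← hg, mem_conjSub_iff, inv_inv] at hb
    simpa using hb
  hom_inv_id := hom_ext (by simp [comp_val, mkHom_val, id_val])
  inv_hom_id := hom_ext (by simp [comp_val, mkHom_val, id_val])

end OrbitCategory

section CentralizerRelation

variable {F : Set (Subgroup G)}

def centRel (F : Set (Subgroup G)) : HomRel (Obj G F)ᵒᵖ :=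
  fun _ Y f g => ∃ c ∈ Subgroup.centralizer (Y.unop.grp : Set G), g.unop.1 = c • f.unop.1

instance : Congruence (centRel F) where
  equivalence :=
    { refl := fun _ => ⟨1, one_mem _, (one_smul _ _).symm⟩
      symm := fun ⟨c, hc, h⟩ => ⟨c⁻¹, inv_mem hc, by rw [h, inv_smul_smul]⟩
      trans := fun ⟨c, hc, h⟩ ⟨c', hc', h'⟩ => ⟨c' * c, mul_mem hc' hc, by rw [h', h, mul_smul]⟩ }
  comp_left k := fun ⟨c, hc, h⟩ => ⟨c, hc, by
    show k.unop.ap _ = c • k.unop.ap _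
    rw [h, Fix.ap_smul]⟩
  comp_right := fun {_ _ _ f f'} k ⟨c, hc, h⟩ => by
    obtain ⟨x, hx⟩ := QuotientGroup.mk_surjective k.unop.1
    refine ⟨x * c * x⁻¹, conj_mem_centralizer (fun a ha => conj_mem_of_val_eq _ hx.symm ha) hc, ?_⟩
    show f'.unop.ap k.unop.1 = _ • f.unop.ap k.unop.1
    rw [← hx, Fix.ap_mk, Fix.ap_mk, h, ← mul_smul, ← mul_smul, inv_mul_cancel_right]

variable {R : Type} [CommRing R]

lemma conjInv_iff (M : OMod G R F) :
    ConjInv M ↔ ∀ ⦃X Y⦄ (f g : X ⟶ Y), centRel F f g → M.map f = M.map g := by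
  refine ⟨fun hM X Y f g ⟨c, hc, h⟩ => ?_, fun hM Q c hc => ?_⟩
  · have hg : g = f ≫ (conjMor Y.unop c⁻¹ (mem_normalizer_of_mem_centralizer (inv_mem hc))).op :=
      Quiver.Hom.unop_inj (hom_ext (by
        rw [h]
        show _ = f.unop.ap ((c⁻¹⁻¹ : G) : G ⧸ _)
        rw [Fix.ap_mk, inv_inv]))
    rw [hg, M.map_comp, hM Y.unop c⁻¹ (inv_mem hc), Category.comp_id]
  · refine (hM _ _ ⟨c⁻¹, inv_mem hc, ?_⟩).symm.trans (M.map_id _)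
    simp [conjMor_val, id_val]

lemma ConjInv.map_eq {M : OMod G R F} (hM : ConjInv M) {X Y : (Obj G F)ᵒᵖ} {f g : X ⟶ Y}
    (h : centRel F f g) : M.map f = M.map g :=
  (conjInv_iff M).1 hM f g h

lemma conjInv_functor_comp (N : Quotient (centRel F) ⥤ ModuleCat.{0} R) :
    ConjInv (Quotient.functor (centRel F) ⋙ N) :=
  (conjInv_iff _).2 fun _ _ _ _ h => congrArg N.map (CategoryTheory.Quotient.sound _ h)

end CentralizerRelation

section Restriction

variable {F : Set (Subgroup G)} {H : Subgroup G}

lemma push_injective (L : Subgroup ↥H) : Function.Injective (push H L) := by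
  intro x y hxy
  induction x using QuotientGroup.induction_on with | H a =>
  induction y using QuotientGroup.induction_on with | H b =>
  rw [push_mk, push_mk, QuotientGroup.eq] at hxy
  rw [QuotientGroup.eq]
  exact (Subgroup.mem_map_iff_mem H.subtype_injective).1 (by simpa using hxy)

lemma mem_of_smul_push_eq {L : Subgroup ↥H} {c : G} {x y : ↥H ⧸ L}
    (h : c • push H L x = push H L y) : c ∈ H := by
  induction x using QuotientGroup.induction_on with | H a =>
  induction y using QuotientGroup.induction_on with | H b =>
  rw [push_mk, push_mk, MulAction.Quotient.smul_mk, smul_eq_mul, QuotientGroup.eq] at h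
  obtain ⟨l, -, hl : (l : G) = _⟩ := h
  have hc : c = b * (l : G)⁻¹ * (a : G)⁻¹ := by rw [hl]; group
  rw [hc]
  exact mul_mem (mul_mem b.2 (inv_mem l.2)) (inv_mem a.2)

lemma coe_mem_centralizer_map_iff {K : Subgroup ↥H} {c : ↥H} :
    (c : G) ∈ Subgroup.centralizer ((K.map H.subtype : Subgroup G) : Set G) ↔
      c ∈ Subgroup.centralizer (K : Set ↥H) := by
  simp only [Subgroup.mem_centralizer_iff, Subgroup.coe_map, Set.forall_mem_image]
  exact forall₂_congr fun a _ => by simp [Subtype.ext_iff]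

lemma centRel_map_toG_iff {X Y : (Obj ↥H (fam H F))ᵒᵖ} {f g : X ⟶ Y} :
    centRel F ((toG H F).op.map f) ((toG H F).op.map g) ↔ centRel (fam H F) f g := by
  constructor
  · rintro ⟨c, hc, h⟩
    have hcH : c ∈ H := mem_of_smul_push_eq h.symm
    refine ⟨⟨c, hcH⟩, coe_mem_centralizer_map_iff.1 hc, push_injective _ ?_⟩
    rw [push_smul]
    exact h
  · rintro ⟨c, hc, h⟩
    refine ⟨c, coe_mem_centralizer_map_iff.2 hc, ?_⟩
    show push H _ g.unop.1 = (c : G) • push H _ f.unop.1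
    rw [h, push_smul]

variable {R : Type} [CommRing R]

lemma ConjInv.res {M : OMod G R F} (hM : ConjInv M) : ConjInv ((resF R F H).obj M) :=
  (conjInv_iff _).2 fun _ _ _ _ h => hM.map_eq (centRel_map_toG_iff.2 h)

variable (F H) in
def toGQuot : Quotient (centRel (fam H F)) ⥤ Quotient (centRel F) :=
  CategoryTheory.Quotient.lift _ ((toG H F).op ⋙ Quotient.functor _) fun _ _ _ _ h =>
    CategoryTheory.Quotient.sound _ (centRel_map_toG_iff.2 h)

instance : (toGQuot F H).Faithful where
  map_injective := by
    rintro ⟨X⟩ ⟨Y⟩ ⟨f⟩ ⟨g⟩ h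
    have h' : (Quotient.functor _).map ((toG H F).op.map f) =
        (Quotient.functor _).map ((toG H F).op.map g) := h
    exact CategoryTheory.Quotient.sound _
      (centRel_map_toG_iff.1 ((Quotient.functor_map_eq_iff _ _ _).1 h'))

end Restriction

section FusionControl

variable {F : Set (Subgroup G)} {H : Subgroup G} {p : ℕ}

lemma toG_essSurj (hp : p.Prime) (hF : IsFamily F) (hFp : ∀ K ∈ F, IsPGroup p ↥K)
    (hind : ¬ p ∣ H.index) : (toG H F).EssSurj := by
  refine ⟨fun Q => ?_⟩
  have : Fact p.Prime := ⟨hp⟩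
  obtain ⟨x, hx⟩ := (hFp _ Q.mem).nonempty_fixed_point_of_prime_not_dvd_card (G ⧸ H)
    (by rwa [← Subgroup.index_eq_card])
  obtain ⟨g, rfl⟩ := QuotientGroup.mk_surjective x
  have hPH : conjSub g⁻¹ Q.grp ≤ H :=
    conjSub_inv_le_iff.2 fun _ => conj_mem_of_smul_eq fun a ha => hx ⟨a, ha⟩
  have hP : (Subgroup.subgroupOf (conjSub g⁻¹ Q.grp) H).map H.subtype = conjSub g⁻¹ Q.grp :=
    Subgroup.map_subgroupOf_eq_of_le hPH
  let Q' : Obj ↥H (fam H F) := ⟨_, show _ ∈ F from hP ▸ hF.1 _ Q.mem _⟩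
  exact ⟨Q', ⟨(isoOfConj Q ((toG H F).obj Q') g hP.symm).symm⟩⟩

lemma exists_centRel_map_toG (hFp : ∀ K ∈ F, IsPGroup p ↥K) (hH : ControlsPFusion p H)
    {A B : Obj ↥H (fam H F)} (w : (toG H F).obj A ⟶ (toG H F).obj B) :
    ∃ f : A ⟶ B, centRel F w.op ((toG H F).map f).op := by
  obtain ⟨g, hg⟩ := QuotientGroup.mk_surjective w.1
  have hgB := fun a (ha : a ∈ ((toG H F).obj A).grp) => conj_mem_of_val_eq w hg.symm ha
  obtain ⟨c, hc, h, hh, rfl⟩ := hH.2 _ g (Subgroup.map_subtype_le _) (hFp _ A.mem)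
    (conjSub_inv_le_iff.2 fun a ha => Subgroup.map_subtype_le _ (hgB a ha))
  have hhB : ∀ a ∈ A.grp, (⟨h, hh⟩ : ↥H)⁻¹ * a * ⟨h, hh⟩ ∈ B.grp := fun a ha => by
    have hca : c⁻¹ * a * c = a := by
      rw [mul_assoc, (Subgroup.mem_centralizer_iff.1 hc a ⟨a, ha, rfl⟩), inv_mul_cancel_left]
    have key : H.subtype (⟨h, hh⟩⁻¹ * a * ⟨h, hh⟩) = (c * h)⁻¹ * a * (c * h) := by
      rw [show (c * h)⁻¹ * a * (c * h) = h⁻¹ * (c⁻¹ * a * c) * h by group, hca]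
      rfl
    exact (Subgroup.mem_map_iff_mem H.subtype_injective).1 (key ▸ hgB a ⟨a, ha, rfl⟩)
  refine ⟨mkHom A B ⟨h, hh⟩ hhB, c⁻¹, inv_mem hc, ?_⟩
  show ((h : G) : G ⧸ _) = c⁻¹ • w.1
  rw [← hg, MulAction.Quotient.smul_mk, smul_eq_mul, inv_mul_cancel_left]

lemma toGQuot_full (hFp : ∀ K ∈ F, IsPGroup p ↥K) (hH : ControlsPFusion p H) :
    (toGQuot F H).Full where
  map_surjective := by
    rintro ⟨X⟩ ⟨Y⟩ ⟨w⟩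
    obtain ⟨f, hf⟩ := exists_centRel_map_toG hFp hH w.unop
    exact ⟨(Quotient.functor _).map f.op, (CategoryTheory.Quotient.sound _ hf).symm⟩

lemma toGQuot_essSurj [(toG H F).EssSurj] : (toGQuot F H).EssSurj where
  mem_essImage := by
    rintro ⟨X⟩
    exact ⟨⟨Opposite.op ((toG H F).objPreimage X.unop)⟩,
      ⟨(Quotient.functor _).mapIso ((toG H F).objObjPreimageIso X.unop).op.symm⟩⟩

lemma toGQuot_isEquivalence (hp : p.Prime) (hF : IsFamily F) (hFp : ∀ K ∈ F, IsPGroup p ↥K)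
    (hH : ControlsPFusion p H) : (toGQuot F H).IsEquivalence :=
  haveI := toG_essSurj hp hF hFp hH.1
  { full := toGQuot_full hFp hH
    essSurj := toGQuot_essSurj }

end FusionControl

instance faithful_whiskeringLeft_obj_of_essSurj {C D E : Type*} [Category C] [Category D]
    [Category E] (Φ : C ⥤ D) [Φ.EssSurj] : ((Functor.whiskeringLeft C D E).obj Φ).Faithful where
  map_injective {M T} h h' eq := by
    ext X
    let e := Φ.objObjPreimageIso X
    rw [← cancel_epi (M.map e.hom), h.naturality, h'.naturality]
    exact congrArg (· ≫ T.map e.hom) (NatTrans.congr_app eq (Φ.objPreimage X))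

section Generation

variable {F : Set (Subgroup G)} {R : Type} [CommRing R]

/-- `stdMod R F B.grp` is definitionally `yoneda.obj B ⋙ ModuleCat.free R`. -/
noncomputable def stdModHomEquiv (B : Obj G F) (M : OMod G R F) :
    (stdMod R F B.grp ⟶ M) ≃ M.obj (Opposite.op B) :=
  (((ModuleCat.adj R).whiskerRight _).homEquiv (yoneda.obj B) M).trans yonedaEquiv

lemma stdModHomEquiv_comp {B : Obj G F} {M T : OMod G R F} (α : stdMod R F B.grp ⟶ M)
    (h : M ⟶ T) : stdModHomEquiv B T (α ≫ h) = h.app _ (stdModHomEquiv B M α) :=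
  rfl

lemma stdModHomEquiv_zero (B : Obj G F) (M : OMod G R F) : stdModHomEquiv B M 0 = 0 := by
  rw [← comp_zero (f := (0 : stdMod R F B.grp ⟶ M)) (Z := M), stdModHomEquiv_comp]
  rfl

def IsGeneratedBy {ι : Type} (M : OMod G R F) (B : ι → Obj G F)
    (m : ∀ i, M.obj (Opposite.op (B i))) : Prop :=
  ∀ ⦃T : OMod G R F⦄ (h : M ⟶ T), (∀ i, h.app _ (m i) = 0) → h = 0

lemma isFG_iff (M : OMod G R F) :
    IsFG M ↔ ∃ (n : ℕ) (B : Fin n → Obj G F) (m : ∀ i, M.obj (Opposite.op (B i))),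
      IsGeneratedBy M B m := by
  constructor
  · rintro ⟨N, ⟨n, B, ⟨e⟩⟩, q, hq⟩
    let ι := biproduct.ι (fun i => stdMod R F (B i).grp)
    refine ⟨n, B, fun i => stdModHomEquiv _ _ (ι i ≫ e.inv ≫ q), fun T h hh => ?_⟩
    refine zero_of_epi_comp q (zero_of_epi_comp e.inv (biproduct.hom_ext' _ _ fun i => ?_))
    apply (stdModHomEquiv (B i) T).injective
    rw [comp_zero, stdModHomEquiv_zero, ← Category.assoc, ← Category.assoc, stdModHomEquiv_comp,
      Category.assoc]
    exact hh i
  · rintro ⟨n, B, m, hm⟩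
    refine ⟨_, ⟨n, B, ⟨Iso.refl _⟩⟩,
      biproduct.desc fun i => (stdModHomEquiv (B i) M).symm (m i),
      Preadditive.epi_of_cancel_zero _ fun h hh => hm h fun i => ?_⟩
    calc h.app _ (m i) = stdModHomEquiv _ _ ((stdModHomEquiv _ M).symm (m i) ≫ h) := by
          rw [stdModHomEquiv_comp, Equiv.apply_symm_apply]
      _ = stdModHomEquiv _ _ (biproduct.ι (fun i => stdMod R F (B i).grp) i ≫
            biproduct.desc (fun i => (stdModHomEquiv (B i) M).symm (m i)) ≫ h) := by
          rw [biproduct.ι_desc_assoc]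
      _ = 0 := by rw [hh, comp_zero, stdModHomEquiv_zero]

lemma IsGeneratedBy.of_res {H : Subgroup G} [(toG H F).EssSurj] {ι : Type} {M : OMod G R F}
    {L : OMod ↥H R (fam H F)} (e : (resF R F H).obj M ≅ L) {B : ι → Obj ↥H (fam H F)}
    {x : ∀ i, L.obj (Opposite.op (B i))} (hx : IsGeneratedBy L B x) :
    IsGeneratedBy M (fun i => (toG H F).obj (B i)) (fun i => e.inv.app _ (x i)) := by
  intro T h hh
  have hres : (resF R F H).map h = 0 :=
    (cancel_epi e.inv).1 ((hx (e.inv ≫ (resF R F H).map h) hh).trans comp_zero.symm)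
  exact ((Functor.whiskeringLeft _ _ (ModuleCat.{0} R)).obj (toG H F).op).map_injective hres

lemma isFG_of_res {H : Subgroup G} [(toG H F).EssSurj] {M : OMod G R F}
    {L : OMod ↥H R (fam H F)} (e : (resF R F H).obj M ≅ L) (hL : IsFG L) : IsFG M := by
  obtain ⟨n, B, x, hx⟩ := (isFG_iff L).1 hL
  exact (isFG_iff M).2 ⟨n, _, _, hx.of_res e⟩

end Generation

section Bijection

variable {F : Set (Subgroup G)} {H : Subgroup G} {R : Type} [CommRing R]
  [(toGQuot F H).IsEquivalence]

lemma exists_conjInv_res_iso {L : OMod ↥H R (fam H F)} (hL : ConjInv L) :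
    ∃ M : OMod G R F, ConjInv M ∧ Nonempty ((resF R F H).obj M ≅ L) := by
  obtain ⟨N, ⟨e⟩⟩ := Functor.EssSurj.mem_essImage
    ((Functor.whiskeringLeft _ _ (ModuleCat.{0} R)).obj (toGQuot F H))
    (CategoryTheory.Quotient.lift _ L fun _ _ _ _ h => hL.map_eq h)
  exact ⟨Quotient.functor _ ⋙ N, conjInv_functor_comp N,
    ⟨Functor.isoWhiskerLeft (Quotient.functor _) e⟩⟩

lemma nonempty_iso_of_res_iso {M M' : OMod G R F} (hM : ConjInv M) (hM' : ConjInv M')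
    (e : (resF R F H).obj M ≅ (resF R F H).obj M') : Nonempty (M ≅ M') := by
  let N := CategoryTheory.Quotient.lift _ M fun _ _ _ _ h => hM.map_eq h
  let N' := CategoryTheory.Quotient.lift _ M' fun _ _ _ _ h => hM'.map_eq h
  let eQuot : toGQuot F H ⋙ N ≅ toGQuot F H ⋙ N' := Quotient.natIsoLift _ e
  exact ⟨Functor.isoWhiskerLeft (Quotient.functor _)
    (((Functor.whiskeringLeft _ _ (ModuleCat.{0} R)).obj (toGQuot F H)).preimageIso eQuot)⟩

end Bijection

end OrbitPaper

open OrbitPaper CategoryTheory CategoryTheory.Limits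

theorem statement12_general (G : Type) [Group G] (p : ℕ) (hp : p.Prime)
    (F : Set (Subgroup G)) (hF : IsFamily F) (hFp : ∀ K ∈ F, IsPGroup p ↥K)
    (H : Subgroup G) (hH : ControlsPFusion p H) :
    (∀ M : OMod G (zloc p hp) F, IsFG M → ConjInv M →
      ConjInv ((resF (zloc p hp) F H).obj M)) ∧
    (∀ L : OMod ↥H (zloc p hp) (fam H F), IsFG L → ConjInv L →
      ∃ M : OMod G (zloc p hp) F, IsFG M ∧ ConjInv M ∧
        Nonempty ((resF (zloc p hp) F H).obj M ≅ L)) ∧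
    (∀ M M' : OMod G (zloc p hp) F, IsFG M → IsFG M' → ConjInv M → ConjInv M' →
      Nonempty ((resF (zloc p hp) F H).obj M ≅ (resF (zloc p hp) F H).obj M') →
      Nonempty (M ≅ M')) := by
  have := toG_essSurj hp hF hFp hH.1
  have := toGQuot_isEquivalence hp hF hFp hH
  refine ⟨fun M _ hM => hM.res, fun L hLfg hL => ?_, fun M M' _ _ hM hM' ⟨e⟩ =>
    nonempty_iso_of_res_iso hM hM' e⟩
  obtain ⟨M, hM, ⟨e⟩⟩ := exists_conjInv_res_iso hL
  exact ⟨M, isFG_of_res e hLfg, hM, ⟨e⟩⟩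

/-- Let `p` be a prime, `R = ℤ_(p)`, `F` a family of `p`-subgroups,
and suppose `H ≤ G` controls `p`-fusion in `G`.  Then `M ↦ res^G_H M` induces a bijection
between the isomorphism classes of conjugation invariant right `RΓ_G`-modules and the
isomorphism classes of conjugation invariant right `RΓ_H`-modules. -/
theorem statement12 (G : Type) [Group G] [Fintype G] (p : ℕ) (hp : p.Prime)
    (F : Set (Subgroup G)) (hF : IsFamily F) (hFp : ∀ K ∈ F, IsPGroup p ↥K)
    (H : Subgroup G) (hH : ControlsPFusion p H) :
    (∀ M : OMod G (zloc p hp) F, IsFG M → ConjInv M →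
      ConjInv ((resF (zloc p hp) F H).obj M)) ∧
    (∀ L : OMod ↥H (zloc p hp) (fam H F), IsFG L → ConjInv L →
      ∃ M : OMod G (zloc p hp) F, IsFG M ∧ ConjInv M ∧
        Nonempty ((resF (zloc p hp) F H).obj M ≅ L)) ∧
    (∀ M M' : OMod G (zloc p hp) F, IsFG M → IsFG M' → ConjInv M → ConjInv M' →
      Nonempty ((resF (zloc p hp) F H).obj M ≅ (resF (zloc p hp) F H).obj M') →
      Nonempty (M ≅ M')) :=
  statement12_general G p hp F hF hFp H hH
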